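/- arXiv:1603.09059 — 3 statements merged into one kernel-verified Lean document; each statement's English description precedes it below -/
import Mathlib

section
/- Let $\theta_1, \theta_2 > 0$, $0 \le s_1 < \cdots < s_n \le 1$, $\Delta_i = s_i - s_{i-1}$, and $R_j = [e^{-\theta_j|s_m-s_l|}]_{m,l}$ for $j = 1,2$. Then $\mathrm{tr}(R_1 R_2^{-1}) = \sum_{i=2}^n \frac{(e^{-\theta_2\Delta_i} - e^{-\theta_1\Delta_i})^2}{1 - e^{-2\theta_2\Delta_i}} + \sum_{i=2}^n \frac{1 - e^{-2\theta_1\Delta_i}}{1 - e^{-2\theta_2\Delta_i}} + 1.$ -/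
/-!
Points at strictly increasing times make the exponential correlation a Markov kernel: for
`m ≤ i` one has `R m (i+1) = R m i * ρᵢ` with `ρᵢ = exp (-θ (s (i+1) - s i))`, and
symmetrically below the diagonal. Hence `R⁻¹` is tridiagonal: it is the identity plus, for every gap `i`, the
block `[[ρᵢ², -ρᵢ], [-ρᵢ, ρᵢ²]] / (1 - ρᵢ²)` on rows and columns `i, i + 1`. Multiplying `R`
by that block cancels column `i + 1` above row `i + 1` and column `i` below row `i`, so summing
over the gaps removes exactly the off-diagonal entries of `R`. With `R₂⁻¹` known, `tr (R₁ R₂⁻¹)`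
only involves the diagonal and first off-diagonals of `R₁`, whose entries are `1` and `rᵢ`, and
each gap contributes `1 + 2 ρᵢ (ρᵢ - rᵢ) / (1 - ρᵢ²) = ((ρᵢ - rᵢ)² + 1 - rᵢ²) / (1 - ρᵢ²)`.
-/

open Matrix Real

namespace Matrix

variable {l m n α : Type*} [Fintype m] [DecidableEq m] [DecidableEq n]
  [NonUnitalNonAssocSemiring α]

theorem mul_single_apply (M : Matrix l m α) (i : m) (j : n) (c : α) (a : l) (b : n) :
    (M * single i j c) a b = if b = j then M a i * c else 0 := by
  split_ifs with h
  · subst h; exact mul_single_apply_same c i b a M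
  · exact mul_single_apply_of_ne c i j a b h M

end Matrix

namespace Fin

variable {M : Type*} [AddCommMonoid M] {n : ℕ}

theorem sum_ite_eq_succ (l : Fin (n + 1)) (x : M) :
    ∑ i : Fin n, (if l = i.succ then x else 0) = if l = 0 then 0 else x := by
  cases l using Fin.cases with
  | zero => simp [(Fin.succ_ne_zero _).symm]
  | succ j => simp [Fin.succ_ne_zero]

theorem sum_ite_eq_castSucc (l : Fin (n + 1)) (x : M) :
    ∑ i : Fin n, (if l = i.castSucc then x else 0) = if l = Fin.last n then 0 else x := by
  cases l using Fin.lastCases with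
  | last => simp [(Fin.castSucc_ne_last _).symm]
  | cast j => simp [Fin.castSucc_ne_last]

end Fin

noncomputable section

namespace ExpCorrelation

variable {n : ℕ}

def expCorr (θ : ℝ) (s : Fin (n + 1) → ℝ) : Matrix (Fin (n + 1)) (Fin (n + 1)) ℝ :=
  of fun m l => exp (-θ * |s m - s l|)

def gapCorr (θ : ℝ) (s : Fin (n + 1) → ℝ) (i : Fin n) : ℝ :=
  exp (-θ * (s i.succ - s i.castSucc))

/-- `[[1, ρ], [ρ, 1]]⁻¹ - 1`, placed on rows and columns `i, i + 1`. -/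
def gapBlock (ρ : ℝ) (i : Fin n) : Matrix (Fin (n + 1)) (Fin (n + 1)) ℝ :=
  single i.castSucc i.castSucc (ρ ^ 2 / (1 - ρ ^ 2)) + single i.succ i.succ (ρ ^ 2 / (1 - ρ ^ 2))
    - single i.castSucc i.succ (ρ / (1 - ρ ^ 2)) - single i.succ i.castSucc (ρ / (1 - ρ ^ 2))

theorem mul_gapBlock_apply (A : Matrix (Fin (n + 1)) (Fin (n + 1)) ℝ) (ρ : ℝ) (i : Fin n)
    (m l : Fin (n + 1)) :
    (A * gapBlock ρ i) m l =
      (if l = i.castSucc then (ρ ^ 2 * A m i.castSucc - ρ * A m i.succ) / (1 - ρ ^ 2) else 0) +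
      (if l = i.succ then (ρ ^ 2 * A m i.succ - ρ * A m i.castSucc) / (1 - ρ ^ 2) else 0) := by
  have hcs : i.castSucc ≠ i.succ := Fin.castSucc_lt_succ.ne
  simp only [gapBlock, Matrix.mul_add, Matrix.mul_sub, Matrix.add_apply, Matrix.sub_apply,
    mul_single_apply]
  by_cases hc : l = i.castSucc
  · subst hc; simp only [if_pos, hcs, if_false]; ring
  by_cases hs : l = i.succ
  · subst hs; simp only [if_pos, hcs.symm, if_false]; ring
  · simp [hc, hs]

theorem trace_mul_gapBlock (A : Matrix (Fin (n + 1)) (Fin (n + 1)) ℝ) (ρ : ℝ) (i : Fin n) :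
    trace (A * gapBlock ρ i) =
      (ρ ^ 2 * (A i.castSucc i.castSucc + A i.succ i.succ)
        - ρ * (A i.castSucc i.succ + A i.succ i.castSucc)) / (1 - ρ ^ 2) := by
  simp only [gapBlock, Matrix.mul_add, Matrix.mul_sub, trace_add, trace_sub, trace_mul_single,
    MulOpposite.smul_eq_mul_unop, MulOpposite.unop_op]
  ring

variable {θ : ℝ} {s : Fin (n + 1) → ℝ}

@[simp]
theorem expCorr_apply_self (m : Fin (n + 1)) : expCorr θ s m m = 1 := by
  simp [expCorr]

theorem expCorr_apply_succ (hs : Monotone s) {m : Fin (n + 1)} {i : Fin n}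
    (hm : m ≤ i.castSucc) : expCorr θ s m i.succ = expCorr θ s m i.castSucc * gapCorr θ s i := by
  have hm' : s m ≤ s i.castSucc := hs hm
  have hi : s i.castSucc ≤ s i.succ := hs Fin.castSucc_lt_succ.le
  rw [expCorr, gapCorr, of_apply, of_apply, abs_of_nonpos (by linarith),
    abs_of_nonpos (by linarith), ← exp_add]
  ring_nf

theorem expCorr_apply_castSucc (hs : Monotone s) {m : Fin (n + 1)} {i : Fin n}
    (hm : i.succ ≤ m) : expCorr θ s m i.castSucc = expCorr θ s m i.succ * gapCorr θ s i := by
  have hm' : s i.succ ≤ s m := hs hm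
  have hi : s i.castSucc ≤ s i.succ := hs Fin.castSucc_lt_succ.le
  rw [expCorr, gapCorr, of_apply, of_apply, abs_of_nonneg (by linarith),
    abs_of_nonneg (by linarith), ← exp_add]
  ring_nf

theorem gapCorr_sq (θ : ℝ) (s : Fin (n + 1) → ℝ) (i : Fin n) :
    gapCorr θ s i ^ 2 = exp (-2 * θ * (s i.succ - s i.castSucc)) := by
  rw [gapCorr, sq, ← exp_add]
  ring_nf

theorem gapCorr_sq_ne_one (hs : StrictMono s) (hθ : θ ≠ 0) (i : Fin n) :
    gapCorr θ s i ^ 2 ≠ 1 := by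
  have hgap : s i.succ - s i.castSucc ≠ 0 := (sub_pos.mpr (hs Fin.castSucc_lt_succ)).ne'
  rw [gapCorr_sq, Ne, exp_eq_one_iff]
  exact mul_ne_zero (mul_ne_zero (by norm_num) hθ) hgap

theorem expCorr_mul_gapBlock_apply (hs : Monotone s) (i : Fin n)
    (hρ : gapCorr θ s i ^ 2 ≠ 1) (m l : Fin (n + 1)) :
    (expCorr θ s * gapBlock (gapCorr θ s i) i) m l =
      (if l = i.succ ∧ m < l then -expCorr θ s m l else 0) +
      (if l = i.castSucc ∧ l < m then -expCorr θ s m l else 0) := by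
  have hcs : i.castSucc ≠ i.succ := Fin.castSucc_lt_succ.ne
  have hρ' : 1 - gapCorr θ s i ^ 2 ≠ 0 := sub_ne_zero.mpr hρ.symm
  rw [mul_gapBlock_apply]
  rcases le_or_gt m i.castSucc with hm | hm
  · have hms : m < i.succ := Fin.le_castSucc_iff.mp hm
    rw [expCorr_apply_succ hs hm]
    by_cases hl : l = i.castSucc
    · subst hl
      simp only [↓reduceIte, hcs, hm.not_gt, false_and, and_false, add_zero]
      ring
    by_cases hl' : l = i.succ
    · subst hl'
      simp only [hl, hms, expCorr_apply_succ hs hm, ↓reduceIte, and_self, false_and, zero_add,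
        add_zero]
      field_simp
      ring
    simp [hl, hl']
  · have hsm : i.succ ≤ m := Fin.castSucc_lt_iff_succ_le.mp hm
    rw [expCorr_apply_castSucc hs hsm]
    by_cases hl : l = i.castSucc
    · subst hl
      simp only [hcs, hm, expCorr_apply_castSucc hs hsm, ↓reduceIte, and_self, false_and,
        zero_add, add_zero]
      field_simp
      ring
    by_cases hl' : l = i.succ
    · subst hl'
      simp only [hl, hsm.not_gt, ↓reduceIte, false_and, and_false, add_zero]
      ring
    simp [hl, hl']

theorem sum_expCorr_mul_gapBlock_apply (hs : StrictMono s) (hθ : θ ≠ 0) (m l : Fin (n + 1)) :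
    ∑ i, (expCorr θ s * gapBlock (gapCorr θ s i) i) m l =
      if m = l then 0 else -expCorr θ s m l := by
  simp only [expCorr_mul_gapBlock_apply hs.monotone _ (gapCorr_sq_ne_one hs hθ _),
    Finset.sum_add_distrib, ite_and, Fin.sum_ite_eq_succ, Fin.sum_ite_eq_castSucc]
  rcases lt_trichotomy m l with h | rfl | h
  · simp [h, h.ne, h.not_gt, Fin.ne_zero_of_lt h]
  · simp
  · simp [h, h.ne', h.not_gt, Fin.ne_last_of_lt h]

def expCorrPrecision (θ : ℝ) (s : Fin (n + 1) → ℝ) : Matrix (Fin (n + 1)) (Fin (n + 1)) ℝ :=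
  1 + ∑ i, gapBlock (gapCorr θ s i) i

theorem expCorr_mul_expCorrPrecision (hs : StrictMono s) (hθ : θ ≠ 0) :
    expCorr θ s * expCorrPrecision θ s = 1 := by
  ext m l
  rw [expCorrPrecision, Matrix.mul_add, Matrix.mul_one, Finset.mul_sum, Matrix.add_apply,
    Matrix.sum_apply, sum_expCorr_mul_gapBlock_apply hs hθ, one_apply]
  split_ifs with h
  · subst h; simp
  · ring

theorem inv_expCorr (hs : StrictMono s) (hθ : θ ≠ 0) :
    (expCorr θ s)⁻¹ = expCorrPrecision θ s :=
  inv_eq_right_inv (expCorr_mul_expCorrPrecision hs hθ)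

theorem trace_expCorr (θ : ℝ) (s : Fin (n + 1) → ℝ) : trace (expCorr θ s) = n + 1 := by
  simp [trace]

theorem trace_expCorr_mul_inv_expCorr (θ₁ : ℝ) {θ₂ : ℝ} (hs : StrictMono s) (hθ₂ : θ₂ ≠ 0) :
    trace (expCorr θ₁ s * (expCorr θ₂ s)⁻¹) =
      ∑ i, (gapCorr θ₂ s i - gapCorr θ₁ s i) ^ 2 / (1 - gapCorr θ₂ s i ^ 2) +
      ∑ i, (1 - gapCorr θ₁ s i ^ 2) / (1 - gapCorr θ₂ s i ^ 2) + 1 := by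
  have hρ : ∀ i, 1 - gapCorr θ₂ s i ^ 2 ≠ 0 := fun i =>
    sub_ne_zero.mpr (gapCorr_sq_ne_one hs hθ₂ i).symm
  have hr : ∀ i : Fin n, expCorr θ₁ s i.castSucc i.succ = gapCorr θ₁ s i := fun i => by
    simpa using expCorr_apply_succ (θ := θ₁) hs.monotone le_rfl
  have hr' : ∀ i : Fin n, expCorr θ₁ s i.succ i.castSucc = gapCorr θ₁ s i := fun i => by
    simpa using expCorr_apply_castSucc (θ := θ₁) hs.monotone le_rfl
  rw [inv_expCorr hs hθ₂, expCorrPrecision, Matrix.mul_add, Matrix.mul_one, Finset.mul_sum,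
    trace_add, trace_sum]
  simp only [trace_mul_gapBlock, hr, hr', expCorr_apply_self, trace_expCorr]
  have hterm : ∀ ρ r : ℝ, 1 - ρ ^ 2 ≠ 0 → (ρ - r) ^ 2 / (1 - ρ ^ 2) + (1 - r ^ 2) / (1 - ρ ^ 2)
      = 1 + (ρ ^ 2 * (1 + 1) - ρ * (r + r)) / (1 - ρ ^ 2) := by
    intro ρ r hρ
    field_simp
    ring
  rw [← Finset.sum_add_distrib, Finset.sum_congr rfl fun i _ => hterm _ _ (hρ i),
    Finset.sum_add_distrib]
  simp only [Finset.sum_const, Finset.card_univ, Fintype.card_fin, nsmul_eq_mul, mul_one]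
  ring

end ExpCorrelation

end

theorem stmt2_general (n : ℕ) (θ₁ θ₂ : ℝ) (h2 : 0 < θ₂)
    (s : Fin (n + 1) → ℝ) (hs : StrictMono s) :
    Matrix.trace
        ((Matrix.of fun m l : Fin (n + 1) => Real.exp (-θ₁ * |s m - s l|)) *
          (Matrix.of fun m l : Fin (n + 1) => Real.exp (-θ₂ * |s m - s l|))⁻¹) =
      (∑ i : Fin n,
        (Real.exp (-θ₂ * (s i.succ - s i.castSucc)) -
            Real.exp (-θ₁ * (s i.succ - s i.castSucc))) ^ 2 /
          (1 - Real.exp (-2 * θ₂ * (s i.succ - s i.castSucc)))) +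
      (∑ i : Fin n,
        (1 - Real.exp (-2 * θ₁ * (s i.succ - s i.castSucc))) /
          (1 - Real.exp (-2 * θ₂ * (s i.succ - s i.castSucc)))) + 1 := by
  have h := ExpCorrelation.trace_expCorr_mul_inv_expCorr θ₁ hs h2.ne'
  simp only [ExpCorrelation.gapCorr_sq] at h
  exact h

theorem stmt2 (n : ℕ) (θ₁ θ₂ : ℝ) (h1 : 0 < θ₁) (h2 : 0 < θ₂)
    (s : Fin (n + 1) → ℝ) (hs : StrictMono s) (h0 : 0 ≤ s 0) (hl : s (Fin.last n) ≤ 1) :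
    Matrix.trace
        ((Matrix.of fun m l : Fin (n + 1) => Real.exp (-θ₁ * |s m - s l|)) *
          (Matrix.of fun m l : Fin (n + 1) => Real.exp (-θ₂ * |s m - s l|))⁻¹) =
      (∑ i : Fin n,
        (Real.exp (-θ₂ * (s i.succ - s i.castSucc)) -
            Real.exp (-θ₁ * (s i.succ - s i.castSucc))) ^ 2 /
          (1 - Real.exp (-2 * θ₂ * (s i.succ - s i.castSucc)))) +
      (∑ i : Fin n,
        (1 - Real.exp (-2 * θ₁ * (s i.succ - s i.castSucc))) /
          (1 - Real.exp (-2 * θ₂ * (s i.succ - s i.castSucc)))) + 1 :=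
  stmt2_general n θ₁ θ₂ h2 s hs
end

section
/- For $|\rho_0| < 1$ and $\theta_0 > 0$, the quadratic form $\frac{\theta_0^2}{4(1-\rho_0^2)^2} \, v^\top \Sigma_\xi \, v$ with $v = (1, 1, -2\rho_0\sqrt{1+\rho_0^2})^\top$ and $\Sigma_\xi = \begin{pmatrix} 2 & 2\rho_0^2 & 2\rho_0/\sqrt{1+\rho_0^2} \\ 2\rho_0^2 & 2 & 2\rho_0/\sqrt{1+\rho_0^2} \\ 2\rho_0/\sqrt{1+\rho_0^2} & 2\rho_0/\sqrt{1+\rho_0^2} & 1 \end{pmatrix}$ equals $\theta_0^2$. -/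
open Matrix Real

noncomputable def scoreCov (ρ : ℝ) : Matrix (Fin 3) (Fin 3) ℝ :=
  !![2, 2 * ρ ^ 2, 2 * ρ / √(1 + ρ ^ 2);
     2 * ρ ^ 2, 2, 2 * ρ / √(1 + ρ ^ 2);
     2 * ρ / √(1 + ρ ^ 2), 2 * ρ / √(1 + ρ ^ 2), 1]

noncomputable def deltaWeight (ρ : ℝ) : Fin 3 → ℝ :=
  ![1, 1, -2 * ρ * √(1 + ρ ^ 2)]

lemma scoreCov_mulVec_deltaWeight (ρ : ℝ) :
    scoreCov ρ *ᵥ deltaWeight ρ = (2 * (1 - ρ ^ 2)) • ![1, 1, ρ / √(1 + ρ ^ 2)] := by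
  have hsq : √(1 + ρ ^ 2) ^ 2 = 1 + ρ ^ 2 := sq_sqrt (by positivity)
  have hne : √(1 + ρ ^ 2) ≠ 0 := by positivity
  ext i
  fin_cases i <;>
    simp only [mulVec, vec3_dotProduct, scoreCov, deltaWeight, of_apply, Fin.isValue, Fin.zero_eta,
      Fin.mk_one, Fin.reduceFinMk, cons_val, Pi.smul_apply, smul_eq_mul] <;>
    field_simp
  · ring
  · ring
  · rw [hsq]; ring

lemma deltaWeight_dotProduct_scoreCov_mulVec (ρ : ℝ) :
    deltaWeight ρ ⬝ᵥ (scoreCov ρ *ᵥ deltaWeight ρ) = 4 * (1 - ρ ^ 2) ^ 2 := by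
  have hne : √(1 + ρ ^ 2) ≠ 0 := by positivity
  rw [scoreCov_mulVec_deltaWeight, dotProduct_smul, deltaWeight, vec3_dotProduct', smul_eq_mul]
  field_simp
  ring

theorem stmt13_general (ρ₀ θ₀ : ℝ) (hρ : |ρ₀| < 1) :
    θ₀ ^ 2 / (4 * (1 - ρ₀ ^ 2) ^ 2) *
      (![1, 1, -2 * ρ₀ * Real.sqrt (1 + ρ₀ ^ 2)] ⬝ᵥ
        (!![2, 2 * ρ₀ ^ 2, 2 * ρ₀ / Real.sqrt (1 + ρ₀ ^ 2);
            2 * ρ₀ ^ 2, 2, 2 * ρ₀ / Real.sqrt (1 + ρ₀ ^ 2);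
            2 * ρ₀ / Real.sqrt (1 + ρ₀ ^ 2), 2 * ρ₀ / Real.sqrt (1 + ρ₀ ^ 2), 1] *ᵥ
          ![1, 1, -2 * ρ₀ * Real.sqrt (1 + ρ₀ ^ 2)])) = θ₀ ^ 2 := by
  have hne : 1 - ρ₀ ^ 2 ≠ 0 := by
    have : ρ₀ ^ 2 < 1 := (sq_lt_one_iff_abs_lt_one ρ₀).mpr hρ
    linarith
  change θ₀ ^ 2 / (4 * (1 - ρ₀ ^ 2) ^ 2) *
    (deltaWeight ρ₀ ⬝ᵥ (scoreCov ρ₀ *ᵥ deltaWeight ρ₀)) = θ₀ ^ 2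
  rw [deltaWeight_dotProduct_scoreCov_mulVec, div_mul_cancel₀ _ (by positivity)]

theorem stmt13 (ρ₀ θ₀ : ℝ) (hρ : |ρ₀| < 1) (hθ : 0 < θ₀) :
    θ₀ ^ 2 / (4 * (1 - ρ₀ ^ 2) ^ 2) *
      (![1, 1, -2 * ρ₀ * Real.sqrt (1 + ρ₀ ^ 2)] ⬝ᵥ
        (!![2, 2 * ρ₀ ^ 2, 2 * ρ₀ / Real.sqrt (1 + ρ₀ ^ 2);
            2 * ρ₀ ^ 2, 2, 2 * ρ₀ / Real.sqrt (1 + ρ₀ ^ 2);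
            2 * ρ₀ / Real.sqrt (1 + ρ₀ ^ 2), 2 * ρ₀ / Real.sqrt (1 + ρ₀ ^ 2), 1] *ᵥ
          ![1, 1, -2 * ρ₀ * Real.sqrt (1 + ρ₀ ^ 2)])) = θ₀ ^ 2 :=
  stmt13_general ρ₀ θ₀ hρ
end

section
/- For $\theta_0 > 0$, $\sigma_{01}, \sigma_{02} > 0$, $|\rho_0| < 1$, let $\Sigma_{\theta\rho\sigma_1\sigma_2} = \theta_0^2 D \Sigma_\xi D^\top$ with $D = \mathrm{diag}(\sigma_{01}^2, \sigma_{02}^2, \sqrt{1+\rho_0^2}\,\sigma_{01}\sigma_{02})$, and let $H = \begin{pmatrix} 1 & 0 & 0 \\ 0 & 1 & 0 \\ -\frac{\rho_0}{2\sigma_{01}^2\theta_0} & -\frac{\rho_0}{2\sigma_{02}^2\theta_0} & \frac{1}{\sigma_{01}\sigma_{02}\theta_0} \end{pmatrix}$. Then $H \Sigma_{\theta\rho\sigma_1\sigma_2} H^\top = \begin{pmatrix} 2(\theta_0\sigma_{01}^2)^2 & 2(\theta_0\rho_0\sigma_{01}\sigma_{02})^2 & \theta_0\rho_0\sigma_{01}^2(1-\rho_0^2)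 \\ 2(\theta_0\rho_0\sigma_{01}\sigma_{02})^2 & 2(\theta_0\sigma_{02}^2)^2 & \theta_0\rho_0\sigma_{02}^2(1-\rho_0^2) \\ \theta_0\rho_0\sigma_{01}^2(1-\rho_0^2) & \theta_0\rho_0\sigma_{02}^2(1-\rho_0^2) & (\rho_0^2-1)^2 \end{pmatrix}$. -/
open Matrix Real

theorem aux1 (σ₁ σ₂ ρ s : ℝ) (hs : s ≠ 0) (hsq : s ^ 2 = 1 + ρ ^ 2) :
    Matrix.diagonal ![σ₁ ^ 2, σ₂ ^ 2, s * σ₁ * σ₂] *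
      !![2, 2 * ρ ^ 2, 2 * ρ / s;
         2 * ρ ^ 2, 2, 2 * ρ / s;
         2 * ρ / s, 2 * ρ / s, 1] *
      (Matrix.diagonal ![σ₁ ^ 2, σ₂ ^ 2, s * σ₁ * σ₂])ᵀ =
    !![2 * σ₁ ^ 4, 2 * ρ ^ 2 * σ₁ ^ 2 * σ₂ ^ 2, 2 * ρ * σ₁ ^ 3 * σ₂;
       2 * ρ ^ 2 * σ₁ ^ 2 * σ₂ ^ 2, 2 * σ₂ ^ 4, 2 * ρ * σ₁ * σ₂ ^ 3;
       2 * ρ * σ₁ ^ 3 * σ₂, 2 * ρ * σ₁ * σ₂ ^ 3, (1 + ρ ^ 2) * σ₁ ^ 2 * σ₂ ^ 2] := by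
  have hu : (2*ρ/s) * s = 2*ρ := div_mul_cancel₀ _ hs
  generalize hU : 2*ρ/s = u at hu ⊢
  ext i j
  fin_cases i <;> fin_cases j <;>
    simp [Matrix.mul_apply, Matrix.diagonal, Fin.sum_univ_three] <;>
    first
      | ring1
      | (left; ring1)
      | linear_combination (σ₁^3*σ₂) * hu
      | linear_combination (σ₁*σ₂^3) * hu
      | linear_combination (σ₁^2*σ₂^2) * hsq

set_option maxHeartbeats 1000000 in
theorem aux2 (θ₀ σ₁ σ₂ ρ : ℝ) (hθ : θ₀ ≠ 0) (h1 : σ₁ ≠ 0) (h2 : σ₂ ≠ 0) :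
    !![(1 : ℝ), 0, 0;
       0, 1, 0;
       -ρ / (2 * σ₁ ^ 2 * θ₀), -ρ / (2 * σ₂ ^ 2 * θ₀), 1 / (σ₁ * σ₂ * θ₀)] *
      (θ₀ ^ 2 •
        !![2 * σ₁ ^ 4, 2 * ρ ^ 2 * σ₁ ^ 2 * σ₂ ^ 2, 2 * ρ * σ₁ ^ 3 * σ₂;
           2 * ρ ^ 2 * σ₁ ^ 2 * σ₂ ^ 2, 2 * σ₂ ^ 4, 2 * ρ * σ₁ * σ₂ ^ 3;
           2 * ρ * σ₁ ^ 3 * σ₂, 2 * ρ * σ₁ * σ₂ ^ 3, (1 + ρ ^ 2) * σ₁ ^ 2 * σ₂ ^ 2]) *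
      (!![(1 : ℝ), 0, 0;
          0, 1, 0;
          -ρ / (2 * σ₁ ^ 2 * θ₀), -ρ / (2 * σ₂ ^ 2 * θ₀), 1 / (σ₁ * σ₂ * θ₀)])ᵀ =
    !![2 * (θ₀ * σ₁ ^ 2) ^ 2, 2 * (θ₀ * ρ * σ₁ * σ₂) ^ 2, θ₀ * ρ * σ₁ ^ 2 * (1 - ρ ^ 2);
       2 * (θ₀ * ρ * σ₁ * σ₂) ^ 2, 2 * (θ₀ * σ₂ ^ 2) ^ 2, θ₀ * ρ * σ₂ ^ 2 * (1 - ρ ^ 2);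
       θ₀ * ρ * σ₁ ^ 2 * (1 - ρ ^ 2), θ₀ * ρ * σ₂ ^ 2 * (1 - ρ ^ 2), (ρ ^ 2 - 1) ^ 2] := by
  ext i j
  fin_cases i <;> fin_cases j <;>
    simp [Matrix.mul_apply, Fin.sum_univ_three, Matrix.transpose_apply, Matrix.vecHead, Matrix.vecTail] <;>
    first
      | ring1
      | (field_simp; ring1)
      | (left; field_simp; ring1)


open Matrix Real

theorem stmt16 (θ₀ σ₁ σ₂ ρ : ℝ) (hθ : 0 < θ₀) (h1 : 0 < σ₁) (h2 : 0 < σ₂) (hρ : |ρ| < 1) :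
    !![(1 : ℝ), 0, 0;
       0, 1, 0;
       -ρ / (2 * σ₁ ^ 2 * θ₀), -ρ / (2 * σ₂ ^ 2 * θ₀), 1 / (σ₁ * σ₂ * θ₀)] *
      (θ₀ ^ 2 •
        (Matrix.diagonal ![σ₁ ^ 2, σ₂ ^ 2, Real.sqrt (1 + ρ ^ 2) * σ₁ * σ₂] *
          !![2, 2 * ρ ^ 2, 2 * ρ / Real.sqrt (1 + ρ ^ 2);
             2 * ρ ^ 2, 2, 2 * ρ / Real.sqrt (1 + ρ ^ 2);
             2 * ρ / Real.sqrt (1 + ρ ^ 2), 2 * ρ / Real.sqrt (1 + ρ ^ 2), 1] *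
          (Matrix.diagonal ![σ₁ ^ 2, σ₂ ^ 2, Real.sqrt (1 + ρ ^ 2) * σ₁ * σ₂])ᵀ)) *
      (!![(1 : ℝ), 0, 0;
          0, 1, 0;
          -ρ / (2 * σ₁ ^ 2 * θ₀), -ρ / (2 * σ₂ ^ 2 * θ₀), 1 / (σ₁ * σ₂ * θ₀)])ᵀ =
    !![2 * (θ₀ * σ₁ ^ 2) ^ 2, 2 * (θ₀ * ρ * σ₁ * σ₂) ^ 2, θ₀ * ρ * σ₁ ^ 2 * (1 - ρ ^ 2);
       2 * (θ₀ * ρ * σ₁ * σ₂) ^ 2, 2 * (θ₀ * σ₂ ^ 2) ^ 2, θ₀ * ρ * σ₂ ^ 2 * (1 - ρ ^ 2);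
       θ₀ * ρ * σ₁ ^ 2 * (1 - ρ ^ 2), θ₀ * ρ * σ₂ ^ 2 * (1 - ρ ^ 2), (ρ ^ 2 - 1) ^ 2] := by
  have hs : (0:ℝ) < 1 + ρ ^ 2 := by positivity
  have hsne : Real.sqrt (1 + ρ ^ 2) ≠ 0 := by positivity
  have hsq : Real.sqrt (1 + ρ ^ 2) ^ 2 = 1 + ρ ^ 2 := Real.sq_sqrt hs.le
  rw [aux1 σ₁ σ₂ ρ _ hsne hsq, aux2 θ₀ σ₁ σ₂ ρ hθ.ne' h1.ne' h2.ne']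
end
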